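/- arXiv:2510.05876 — 8 statements merged into one kernel-verified Lean document; each statement's English description precedes it below -/
import Mathlib

section
/- For the formula Φ = DoubleLongEq_n, D^rrs(Φ) = D^std(Φ) = D^trv(Φ) = {(u_i, t_j) : i,j ∈ [n]}. In particular, for all i,j ∈ [n] the pair (u_i, t_j) is in D^rrs(Φ). -/
namespace QCDCLDep

/-- A literal is a variable together with a polarity (`true` = positive). -/
abbrev Lit (V : Type) := V × Bool

/-- A PCNF QBF: each variable is existential or universal, has a prefix level,
and the matrix is a set of clauses (sets of literals). -/
structure QBF (V : Type) where
  isExists : V → Prop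
  lvl : V → ℕ
  matrix : Set (Set (Lit V))

variable {V : Type}

/-- The variable `x` occurs in the clause `C`. -/
def varIn (x : V) (C : Set (Lit V)) : Prop := ∃ b, (x, b) ∈ C

/-- Trivial dependency scheme: the existential variable `y` is quantified after
(and differently from) the universal variable `x`. -/
def Dtrv (Φ : QBF V) (x y : V) : Prop :=
  Φ.lvl x < Φ.lvl y ∧ ¬ Φ.isExists x ∧ Φ.isExists y

/-- Clauses reachable from a clause containing `x` via chains of clauses linked
by existential variables trivially depending on `x` (standard-scheme paths). -/
inductive stdReach (Φ : QBF V) (x : V) : Set (Lit V) → Prop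
  | base {C} : C ∈ Φ.matrix → varIn x C → stdReach Φ x C
  | step {C C' z} : stdReach Φ x C → C' ∈ Φ.matrix →
      Dtrv Φ x z → varIn z C → varIn z C' → stdReach Φ x C'

/-- Standard dependency scheme. -/
def Dstd (Φ : QBF V) (x y : V) : Prop :=
  Dtrv Φ x y ∧ ∃ C, stdReach Φ x C ∧ varIn y C

/-- Negation of a literal. -/
def negLit (ℓ : Lit V) : Lit V := (ℓ.1, !ℓ.2)

/-- `conn Φ s ℓ` : the ordered literal pair `(s, ℓ)` is connected via a
resolution path through the matrix of `Φ`. -/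
inductive conn (Φ : QBF V) (s : Lit V) : Lit V → Prop
  | base {C ℓ} : C ∈ Φ.matrix → s ∈ C → ℓ ∈ C → ℓ.1 ≠ s.1 → conn Φ s ℓ
  | step {C ℓ ℓ'} : conn Φ s ℓ → Dtrv Φ s.1 ℓ.1 →
      C ∈ Φ.matrix → negLit ℓ ∈ C → ℓ' ∈ C → ℓ'.1 ≠ ℓ.1 → conn Φ s ℓ'

/-- Reflexive resolution path dependency scheme. -/
def Drrs (Φ : QBF V) (x y : V) : Prop :=
  Dtrv Φ x y ∧
    ((conn Φ (x, true) (y, true) ∧ conn Φ (x, false) (y, false)) ∨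
     (conn Φ (x, true) (y, false) ∧ conn Φ (x, false) (y, true)))

/-- `D`-reduction of a clause: remove every universal literal not blocked by
an existential variable of the clause depending on it according to `D`. -/
def redD (Φ : QBF V) (D : V → V → Prop) (C : Set (Lit V)) : Set (Lit V) :=
  {ℓ ∈ C | Φ.isExists ℓ.1 ∨ ∃ y, varIn y C ∧ Φ.isExists y ∧ D ℓ.1 y}

/-- `D`-reduction of every clause of the matrix. -/
def redQBF (Φ : QBF V) (D : V → V → Prop) : QBF V :=
  { Φ with matrix := (redD Φ D) '' Φ.matrix }

/-- An assignment satisfies a clause if it makes some literal true. -/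
def satC (α : V → Bool) (C : Set (Lit V)) : Prop := ∃ ℓ ∈ C, α ℓ.1 = ℓ.2

/-- The clauses of the pigeonhole formula PHP_n^{n+1} over variables `z i j`
(pigeon `i` in hole `j`). -/
def PHPclauses (n : ℕ) (z : Fin (n+1) → Fin n → V) : Set (Set (Lit V)) :=
  {C | (∃ i, C = {ℓ | ∃ j, ℓ = (z i j, true)}) ∨
       (∃ i i' j, i ≠ i' ∧ C = {(z i j, false), (z i' j, false)})}

/-- Variables of `DoubleLongEq n`: prefix ∃x₁…xₙ ∀u₁…uₙ ∃t₁…tₙ. -/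
inductive DLV (n : ℕ) where
  | x (i : Fin n) | u (i : Fin n) | t (i : Fin n)

def DLlvl {n : ℕ} : DLV n → ℕ
  | .x _ => 0 | .u _ => 1 | .t _ => 2

def DLexists {n : ℕ} : DLV n → Prop
  | .x _ => True | .u _ => False | .t _ => True

/-- The clause Tₙ = (¬t₁ ∨ … ∨ ¬tₙ). -/
def DLTn (n : ℕ) : Set (Lit (DLV n)) := {ℓ | ∃ i, ℓ = (DLV.t i, false)}
/-- The clause Aᵢ = (xᵢ ∨ uᵢ ∨ tᵢ). -/
def DLA (n : ℕ) (i : Fin n) : Set (Lit (DLV n)) :=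
  {(DLV.x i, true), (DLV.u i, true), (DLV.t i, true)}
/-- The clause Bᵢ = (¬xᵢ ∨ ¬uᵢ ∨ tᵢ). -/
def DLB (n : ℕ) (i : Fin n) : Set (Lit (DLV n)) :=
  {(DLV.x i, false), (DLV.u i, false), (DLV.t i, true)}
/-- The clause UTₙ = (¬u₁ ∨ … ∨ ¬uₙ ∨ ¬t₁ ∨ … ∨ ¬tₙ). -/
def DLUT (n : ℕ) : Set (Lit (DLV n)) :=
  {ℓ | (∃ i, ℓ = (DLV.u i, false)) ∨ (∃ i, ℓ = (DLV.t i, false))}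
/-- The clause UT'ₙ = (¬u₁ ∨ … ∨ ¬uₙ ∨ t₁ ∨ … ∨ tₙ). -/
def DLUT' (n : ℕ) : Set (Lit (DLV n)) :=
  {ℓ | (∃ i, ℓ = (DLV.u i, false)) ∨ (∃ i, ℓ = (DLV.t i, true))}

/-- The QBF `DoubleLongEq n`. -/
def DoubleLongEq (n : ℕ) : QBF (DLV n) where
  isExists := DLexists
  lvl := DLlvl
  matrix := {C | C = DLTn n ∨ (∃ i, C = DLA n i) ∨ (∃ i, C = DLB n i) ∨
                 C = DLUT n ∨ C = DLUT' n}

/-- Build a total assignment from values for the x-, u-, and t-variables. -/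
def DLassign {n : ℕ} (xv uv tv : Fin n → Bool) : DLV n → Bool
  | .x i => xv i | .u i => uv i | .t i => tv i

lemma DLtrv_char (n : ℕ) (a b : DLV n) :
    Dtrv (DoubleLongEq n) a b ↔ ∃ i j : Fin n, a = DLV.u i ∧ b = DLV.t j := by
  constructor
  · rintro ⟨hlt, hx, hy⟩
    cases a with
    | x i => exact absurd trivial hx
    | t i => exact absurd trivial hx
    | u i =>
      cases b with
      | x j => simp [DoubleLongEq, DLlvl] at hlt
      | u j => simp [DoubleLongEq, DLlvl] at hlt
      | t j => exact ⟨i, j, rfl, rfl⟩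
  · rintro ⟨i, j, rfl, rfl⟩
    exact ⟨by norm_num [DoubleLongEq, DLlvl], id, trivial⟩

lemma DLtrv_ut (n : ℕ) (i j : Fin n) : Dtrv (DoubleLongEq n) (DLV.u i) (DLV.t j) :=
  ⟨by norm_num [DoubleLongEq, DLlvl], id, trivial⟩

lemma DLUT_mem (n : ℕ) : DLUT n ∈ (DoubleLongEq n).matrix :=
  Or.inr (Or.inr (Or.inr (Or.inl rfl)))

lemma DLUT'_mem (n : ℕ) : DLUT' n ∈ (DoubleLongEq n).matrix :=
  Or.inr (Or.inr (Or.inr (Or.inr rfl)))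

lemma DLstd (n : ℕ) (i j : Fin n) : Dstd (DoubleLongEq n) (DLV.u i) (DLV.t j) :=
  ⟨DLtrv_ut n i j, DLUT n,
    stdReach.base (DLUT_mem n) ⟨false, Or.inl ⟨i, rfl⟩⟩, ⟨false, Or.inr ⟨j, rfl⟩⟩⟩

lemma DLconn_neg_neg (n : ℕ) (i j : Fin n) :
    conn (DoubleLongEq n) (DLV.u i, false) (DLV.t j, false) :=
  conn.base (DLUT_mem n) (Or.inl ⟨i, rfl⟩) (Or.inr ⟨j, rfl⟩) (by simp)

lemma DLconn_neg_pos (n : ℕ) (i j : Fin n) :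
    conn (DoubleLongEq n) (DLV.u i, false) (DLV.t j, true) :=
  conn.base (DLUT'_mem n) (Or.inl ⟨i, rfl⟩) (Or.inr ⟨j, rfl⟩) (by simp)

lemma DLconn_pos_self (n : ℕ) (i : Fin n) :
    conn (DoubleLongEq n) (DLV.u i, true) (DLV.t i, true) :=
  conn.base (Or.inr (Or.inl ⟨i, rfl⟩)) (by simp [DLA]) (by simp [DLA]) (by simp)

lemma DLconn_pos_neg (n : ℕ) (i j : Fin n) (hij : j ≠ i) :
    conn (DoubleLongEq n) (DLV.u i, true) (DLV.t j, false) :=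
  conn.step (DLconn_pos_self n i) (DLtrv_ut n i i) (Or.inl rfl)
    ⟨i, rfl⟩ ⟨j, rfl⟩ (by simp [hij])

lemma DLrrs (n : ℕ) (i j : Fin n) : Drrs (DoubleLongEq n) (DLV.u i) (DLV.t j) := by
  refine ⟨DLtrv_ut n i j, ?_⟩
  by_cases h : j = i
  · subst h
    exact Or.inl ⟨DLconn_pos_self n j, DLconn_neg_neg n j j⟩
  · exact Or.inr ⟨DLconn_pos_neg n i j h, DLconn_neg_pos n i j⟩


/-- For `Φ = DoubleLongEq n`: `D^rrs(Φ) = D^std(Φ) = D^trv(Φ) = {(uᵢ,tⱼ)}`,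
and in particular every pair `(uᵢ, tⱼ)` is in `D^rrs(Φ)`. -/
theorem stmt3 (n : ℕ) :
    Drrs (DoubleLongEq n) = Dstd (DoubleLongEq n) ∧
    Dstd (DoubleLongEq n) = Dtrv (DoubleLongEq n) ∧
    (∀ a b, Dtrv (DoubleLongEq n) a b ↔ ∃ i j : Fin n, a = DLV.u i ∧ b = DLV.t j) ∧
    (∀ i j : Fin n, Drrs (DoubleLongEq n) (DLV.u i) (DLV.t j)) := by
  refine ⟨?_, ?_, DLtrv_char n, DLrrs n⟩
  · funext a b
    apply propext
    constructor
    · rintro ⟨h, -⟩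
      obtain ⟨i, j, rfl, rfl⟩ := (DLtrv_char n a b).mp h
      exact DLstd n i j
    · rintro ⟨h, -⟩
      obtain ⟨i, j, rfl, rfl⟩ := (DLtrv_char n a b).mp h
      exact DLrrs n i j
  · funext a b
    apply propext
    constructor
    · exact fun h => h.1
    · intro h
      obtain ⟨i, j, rfl, rfl⟩ := (DLtrv_char n a b).mp h
      exact DLstd n i j


end QCDCLDep
end

section
/- The matrix of DoubleLongEq_n is satisfiable, but the QBF DoubleLongEq_n is false: for every choice of Skolem functions s_i : {0,1}ⁿ→{0,1} assigning t_i as a function of u₁,…,uₙ, and constants for x₁,…,xₙ, there exists an assignment to the universal variables u₁,…,uₙ falsifying some clause of the matrix. -/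
namespace QCDCLDep

variable {V : Type}

/-- The matrix of `DoubleLongEq n` is satisfiable, but the QBF is false: for any
constants for the x-variables and Skolem functions for the t-variables there is
an assignment to the universal u-variables falsifying some matrix clause. -/
theorem stmt4 (n : ℕ) (hn : 0 < n) :
    (∃ α : DLV n → Bool, ∀ C ∈ (DoubleLongEq n).matrix, satC α C) ∧
    (∀ (xv : Fin n → Bool) (s : Fin n → (Fin n → Bool) → Bool),
        ∃ uv : Fin n → Bool, ∃ C ∈ (DoubleLongEq n).matrix,
          ¬ satC (DLassign xv uv (fun i => s i uv)) C) := by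
  constructor
  · refine ⟨DLassign (fun _ => true) (fun _ => false) (fun _ => false), ?_⟩
    intro C hC
    rcases hC with h | ⟨i, h⟩ | ⟨i, h⟩ | h | h <;> subst h
    · exact ⟨(DLV.t ⟨0, hn⟩, false), ⟨⟨0, hn⟩, rfl⟩, rfl⟩
    · exact ⟨(DLV.x i, true), by simp [DLA], rfl⟩
    · exact ⟨(DLV.u i, false), by simp [DLB], rfl⟩
    · exact ⟨(DLV.u ⟨0, hn⟩, false), Or.inl ⟨_, rfl⟩, rfl⟩
    · exact ⟨(DLV.u ⟨0, hn⟩, false), Or.inl ⟨_, rfl⟩, rfl⟩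
  · intro xv s
    refine ⟨xv, ?_⟩
    by_cases h : ∀ i, s i xv = true
    · refine ⟨DLTn n, Or.inl rfl, ?_⟩
      rintro ⟨ℓ, ⟨i, rfl⟩, hα⟩
      simp only [DLassign] at hα
      exact absurd (h i) (by simp [hα])
    · push_neg at h
      obtain ⟨i, hi⟩ := h
      have hi' : s i xv = false := by simpa using hi
      cases hx : xv i
      · refine ⟨DLA n i, Or.inr (Or.inl ⟨i, rfl⟩), ?_⟩
        rintro ⟨ℓ, hℓ, hα⟩
        simp only [DLA, Set.mem_insert_iff, Set.mem_singleton_iff] at hℓ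
        rcases hℓ with rfl | rfl | rfl <;> simp [DLassign, hx, hi'] at hα
      · refine ⟨DLB n i, Or.inr (Or.inr (Or.inl ⟨i, rfl⟩)), ?_⟩
        rintro ⟨ℓ, hℓ, hα⟩
        simp only [DLB, Set.mem_insert_iff, Set.mem_singleton_iff] at hℓ
        rcases hℓ with rfl | rfl | rfl <;> simp [DLassign, hx, hi'] at hα

end QCDCLDep
end

section
/- The gauge of DoubleLongEq_n is exactly n: any derivation (using only resolutions on the t-variables and universal reductions) of a nonempty clause containing only x-variables from the axioms of DoubleLongEq_n must resolve on every t_i, hence the derived X-clause contains all n x-variables; moreover an X-clause of width n is so derivable. -/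
namespace QCDCLDep

variable {V : Type}

/-- Derivations from the axioms of `DoubleLongEq n` using only non-tautological
resolution on t-variables and universal reduction of unblocked u-literals. -/
inductive tDeriv (n : ℕ) : Set (Lit (DLV n)) → Prop
  | ax {C} : C ∈ (DoubleLongEq n).matrix → tDeriv n C
  | res {C₁ C₂} {i : Fin n} :
      tDeriv n C₁ → tDeriv n C₂ →
      (DLV.t i, true) ∈ C₁ → (DLV.t i, false) ∈ C₂ →
      (∀ v : DLV n,
        ¬ ((v, true) ∈ (C₁ \ {(DLV.t i, true)}) ∪ (C₂ \ {(DLV.t i, false)}) ∧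
           (v, false) ∈ (C₁ \ {(DLV.t i, true)}) ∪ (C₂ \ {(DLV.t i, false)}))) →
      tDeriv n ((C₁ \ {(DLV.t i, true)}) ∪ (C₂ \ {(DLV.t i, false)}))
  | red {C} {ℓ : Lit (DLV n)} :
      tDeriv n C → ℓ ∈ C → ¬ DLexists ℓ.1 →
      (∀ y, varIn y C → DLexists y → ¬ DLlvl ℓ.1 < DLlvl y) →
      tDeriv n (C \ {ℓ})

/-- A nonempty clause containing only x-variables. -/
def XClause {n : ℕ} (C : Set (Lit (DLV n))) : Prop :=
  C.Nonempty ∧ ∀ ℓ ∈ C, ∃ i : Fin n, ℓ.1 = DLV.x i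

lemma tDeriv_nontaut {n : ℕ} {C : Set (Lit (DLV n))} (h : tDeriv n C) :
    ∀ v : DLV n, ¬ ((v, true) ∈ C ∧ (v, false) ∈ C) := by
  induction h with
  | ax hC =>
    intro v hv
    rcases hC with h | ⟨i, h⟩ | ⟨i, h⟩ | h | h <;> subst h <;>
      obtain ⟨h1, h2⟩ := hv <;>
      simp [DLTn, DLA, DLB, DLUT, DLUT', Prod.ext_iff] at h1 h2 <;>
      aesop
  | res _ _ _ _ hnt _ _ => exact hnt
  | red _ _ _ _ ih =>
    intro v hv
    exact ih v ⟨hv.1.1, hv.2.1⟩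
/-- Index `m` is supported in clause `C`. -/
def SuppAt (n : ℕ) (C : Set (Lit (DLV n))) (m : Fin n) : Prop :=
  varIn (DLV.x m) C ∨ (DLV.t m, false) ∈ C ∨
    ((DLV.u m, false) ∈ C ∧ ∃ l : Fin n, (DLV.t l, true) ∈ C ∧ varIn (DLV.x l) C)

/-- Master invariant for derivable clauses. -/
def MainInv (n : ℕ) (C : Set (Lit (DLV n))) : Prop :=
  (∃ k, C = DLA n k ∨ C = DLB n k) ∨
  ((∀ m : Fin n, (DLV.t m, true) ∈ C) ∧ (∀ m : Fin n, (DLV.u m, false) ∈ C)) ∨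
  (∀ m : Fin n, SuppAt n C m)

lemma mainInv_of_tDeriv {n : ℕ} (hn : 2 ≤ n) {C : Set (Lit (DLV n))}
    (h : tDeriv n C) : MainInv n C := by
  induction h with
  | @ax C hC =>
    rcases hC with h | ⟨i, h⟩ | ⟨i, h⟩ | h | h
    · subst h
      refine Or.inr (Or.inr fun m => Or.inr (Or.inl ?_))
      exact ⟨m, rfl⟩
    · exact Or.inl ⟨i, Or.inl h⟩
    · exact Or.inl ⟨i, Or.inr h⟩
    · subst h
      refine Or.inr (Or.inr fun m => Or.inr (Or.inl ?_))
      exact Or.inr ⟨m, rfl⟩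
    · subst h
      refine Or.inr (Or.inl ⟨fun m => Or.inr ⟨m, rfl⟩, fun m => Or.inl ⟨m, rfl⟩⟩)
  | @res C₁ C₂ i h₁ h₂ mem₁ mem₂ hnt ih₁ ih₂ =>
    have nt₁ := tDeriv_nontaut h₁
    have nt₂ := tDeriv_nontaut h₂
    set R := (C₁ \ {(DLV.t i, true)}) ∪ (C₂ \ {(DLV.t i, false)}) with hR
    -- lifting lemmas
    have lift₁ : ∀ ℓ : Lit (DLV n), ℓ ∈ C₁ → ℓ ≠ (DLV.t i, true) → ℓ ∈ R :=
      fun ℓ hℓ hne => Or.inl ⟨hℓ, hne⟩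
    have lift₂ : ∀ ℓ : Lit (DLV n), ℓ ∈ C₂ → ℓ ≠ (DLV.t i, false) → ℓ ∈ R :=
      fun ℓ hℓ hne => Or.inr ⟨hℓ, hne⟩
    have liftx₁ : ∀ m : Fin n, varIn (DLV.x m) C₁ → varIn (DLV.x m) R :=
      fun m ⟨b, hb⟩ => ⟨b, lift₁ _ hb (by simp)⟩
    have liftx₂ : ∀ m : Fin n, varIn (DLV.x m) C₂ → varIn (DLV.x m) R :=
      fun m ⟨b, hb⟩ => ⟨b, lift₂ _ hb (by simp)⟩
    have liftu₁ : ∀ m : Fin n, (DLV.u m, false) ∈ C₁ → (DLV.u m, false) ∈ R :=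
      fun m hb => lift₁ _ hb (by simp)
    have liftu₂ : ∀ m : Fin n, (DLV.u m, false) ∈ C₂ → (DLV.u m, false) ∈ R :=
      fun m hb => lift₂ _ hb (by simp)
    have lifttn₂ : ∀ m : Fin n, m ≠ i → (DLV.t m, false) ∈ C₂ → (DLV.t m, false) ∈ R :=
      fun m hm hb => lift₂ _ hb (by simp [hm])
    have lifttn₁ : ∀ m : Fin n, (DLV.t m, false) ∈ C₁ → (DLV.t m, false) ∈ R :=
      fun m hb => lift₁ _ hb (by simp)
    have lifttp₁ : ∀ m : Fin n, m ≠ i → (DLV.t m, true) ∈ C₁ → (DLV.t m, true) ∈ R :=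
      fun m hm hb => lift₁ _ hb (by simp [hm])
    have lifttp₂ : ∀ m : Fin n, m ≠ i → (DLV.t m, true) ∈ C₂ → (DLV.t m, true) ∈ R :=
      fun m hm hb => lift₂ _ hb (by simp [hm])
    -- C₂ is in the Supp class
    have supp₂ : ∀ m : Fin n, SuppAt n C₂ m := by
      rcases ih₂ with ⟨k, hk | hk⟩ | ⟨hta, _⟩ | hs
      · subst hk; simp [DLA, Prod.ext_iff] at mem₂
      · subst hk; simp [DLB, Prod.ext_iff] at mem₂
      · exact absurd ⟨hta i, mem₂⟩ (nt₂ (DLV.t i))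
      · exact hs
    -- anchors in C₂ survive
    have anchor₂ : ∀ l : Fin n, (DLV.t l, true) ∈ C₂ → varIn (DLV.x l) C₂ →
        (DLV.t l, true) ∈ R ∧ varIn (DLV.x l) R := by
      intro l hl hx
      have hli : l ≠ i := by
        rintro rfl; exact nt₂ (DLV.t l) ⟨hl, mem₂⟩
      exact ⟨lifttp₂ l hli hl, liftx₂ l hx⟩
    -- transfer of support at m ≠ i from C₂ to R
    have supp₂R : ∀ m : Fin n, m ≠ i → SuppAt n R m := by
      intro m hmi
      rcases supp₂ m with hx | ht | ⟨hu, l, hl, hx⟩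
      · exact Or.inl (liftx₂ m hx)
      · exact Or.inr (Or.inl (lifttn₂ m hmi ht))
      · obtain ⟨h1, h2⟩ := anchor₂ l hl hx
        exact Or.inr (Or.inr ⟨liftu₂ m hu, l, h1, h2⟩)
    rcases ih₁ with ⟨k, hk⟩ | ⟨hta, hua⟩ | hs₁
    · -- C₁ = A k or B k, and then k = i and x_i ∈ R
      have hxk : varIn (DLV.x i) C₁ := by
        rcases hk with hk | hk <;> subst hk
        · simp [DLA, Prod.ext_iff] at mem₁
          subst mem₁
          exact ⟨true, by simp [DLA]⟩
        · simp [DLB, Prod.ext_iff] at mem₁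
          subst mem₁
          exact ⟨false, by simp [DLB]⟩
      refine Or.inr (Or.inr fun m => ?_)
      by_cases hmi : m = i
      · subst hmi; exact Or.inl (liftx₁ m hxk)
      · exact supp₂R m hmi
    · -- C₁ all positive t's and all negative u's
      -- find an anchor in R
      have : Nontrivial (Fin n) := Fin.nontrivial_iff_two_le.mpr hn
      obtain ⟨m₀, hm₀⟩ := exists_ne i
      have anchorR : ∃ l : Fin n, (DLV.t l, true) ∈ R ∧ varIn (DLV.x l) R := by
        rcases supp₂ m₀ with hx | ht | ⟨_, l, hl, hx⟩
        · exact ⟨m₀, lifttp₁ m₀ hm₀ (hta m₀), liftx₂ m₀ hx⟩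
        · exact absurd ⟨lifttp₁ m₀ hm₀ (hta m₀), lifttn₂ m₀ hm₀ ht⟩ (hnt (DLV.t m₀))
        · obtain ⟨h1, h2⟩ := anchor₂ l hl hx
          exact ⟨l, h1, h2⟩
      refine Or.inr (Or.inr fun m => ?_)
      by_cases hmi : m = i
      · subst hmi
        exact Or.inr (Or.inr ⟨liftu₁ m (hua m), anchorR⟩)
      · rcases supp₂ m with hx | ht | ⟨hu, l, hl, hx⟩
        · exact Or.inl (liftx₂ m hx)
        · exact Or.inr (Or.inl (lifttn₂ m hmi ht))
        · exact Or.inr (Or.inr ⟨liftu₂ m hu, anchorR⟩)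
    · -- C₁ in Supp class
      refine Or.inr (Or.inr fun m => ?_)
      by_cases hmi : m = i
      · rw [hmi]
        rcases hs₁ i with hx | ht | ⟨hu, l, hl, hx⟩
        · exact Or.inl (liftx₁ i hx)
        · exact absurd ⟨mem₁, ht⟩ (nt₁ (DLV.t i))
        · by_cases hli : l = i
          · exact Or.inl (hli ▸ liftx₁ l hx)
          · exact Or.inr (Or.inr ⟨liftu₁ i hu, l, lifttp₁ l hli hl, liftx₁ l hx⟩)
      · rcases hs₁ m with hx | ht | ⟨hu, l, hl, hx⟩
        · exact Or.inl (liftx₁ m hx)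
        · exact Or.inr (Or.inl (lifttn₁ m ht))
        · by_cases hli : l = i
          · -- anchor broken in C₁, but x_i ∈ C₁; fall back to C₂
            exact supp₂R m hmi
          · exact Or.inr (Or.inr ⟨liftu₁ m hu, l, lifttp₁ l hli hl, liftx₁ l hx⟩)
  | @red C ℓ hC hl hnex hblock ih =>
    -- ℓ is a u-literal and C is t-free
    obtain ⟨j, b, rfl⟩ : ∃ (j : Fin n) (b : Bool), ℓ = (DLV.u j, b) := by
      obtain ⟨v, b⟩ := ℓ
      cases v with
      | x j => exact absurd trivial hnex
      | u j => exact ⟨j, b, rfl⟩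
      | t j => exact absurd trivial hnex
    have tfree : ∀ (m : Fin n) (b' : Bool), (DLV.t m, b') ∉ C := by
      intro m b' hmem
      exact hblock (DLV.t m) ⟨b', hmem⟩ trivial (by simp [DLlvl])
    have hxall : ∀ m : Fin n, varIn (DLV.x m) C := by
      intro m
      rcases ih with ⟨k, hk | hk⟩ | ⟨hta, _⟩ | hs
      · have : (DLV.t k, true) ∈ C := by rw [hk]; simp [DLA]
        exact absurd this (tfree k true)
      · have : (DLV.t k, true) ∈ C := by rw [hk]; simp [DLB]
        exact absurd this (tfree k true)
      · exact absurd (hta m) (tfree m true)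
      · rcases hs m with hx | ht | ⟨_, l, hl, _⟩
        · exact hx
        · exact absurd ht (tfree m false)
        · exact absurd hl (tfree l true)
    refine Or.inr (Or.inr fun m => Or.inl ?_)
    obtain ⟨b', hb'⟩ := hxall m
    exact ⟨b', hb', by simp⟩
lemma part1 {n : ℕ} (hn : 0 < n) {C : Set (Lit (DLV n))} (hD : tDeriv n C)
    (hX : XClause C) (i : Fin n) : varIn (DLV.x i) C := by
  rcases Nat.lt_or_ge n 2 with h2 | h2
  · -- n = 1 : trivial by subsingleton
    obtain ⟨⟨ℓ, hℓ⟩, hall⟩ := hX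
    obtain ⟨i₀, hi₀⟩ := hall ℓ hℓ
    have hii : i = i₀ := by
      have h3 := i.2; have h4 := i₀.2
      exact Fin.ext (by omega)
    refine ⟨ℓ.2, ?_⟩
    rw [hii, ← hi₀]
    simpa using hℓ
  · rcases mainInv_of_tDeriv h2 hD with ⟨k, hk | hk⟩ | ⟨hta, _⟩ | hs
    · have : (DLV.t k, true) ∈ C := by rw [hk]; simp [DLA]
      obtain ⟨i', hi'⟩ := hX.2 _ this
      simp at hi'
    · have : (DLV.t k, true) ∈ C := by rw [hk]; simp [DLB]
      obtain ⟨i', hi'⟩ := hX.2 _ this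
      simp at hi'
    · obtain ⟨i', hi'⟩ := hX.2 _ (hta i)
      simp at hi'
    · rcases hs i with hx | ht | ⟨_, l, hl, _⟩
      · exact hx
      · obtain ⟨i', hi'⟩ := hX.2 _ ht
        simp at hi'
      · obtain ⟨i', hi'⟩ := hX.2 _ hl
        simp at hi'
/-- Intermediate clause: ¬t_j for j ≥ k, plus x_j, u_j for j < k. -/
def DerivMid (n k : ℕ) : Set (Lit (DLV n)) :=
  {ℓ | (∃ j : Fin n, k ≤ (j : ℕ) ∧ ℓ = (DLV.t j, false)) ∨
       (∃ j : Fin n, (j : ℕ) < k ∧ (ℓ = (DLV.x j, true) ∨ ℓ = (DLV.u j, true)))}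

lemma derivMid (n : ℕ) : ∀ k, k ≤ n → tDeriv n (DerivMid n k) := by
  intro k
  induction k with
  | zero =>
    intro _
    have : DerivMid n 0 = DLTn n := by
      ext ℓ
      simp [DerivMid, DLTn]
    rw [this]
    exact tDeriv.ax (Or.inl rfl)
  | succ k ih =>
    intro hk
    have hkn : k < n := hk
    set i : Fin n := ⟨k, hkn⟩ with hi
    have h₁ : tDeriv n (DLA n i) := tDeriv.ax (Or.inr (Or.inl ⟨i, rfl⟩))
    have h₂ : tDeriv n (DerivMid n k) := ih (Nat.le_of_lt hkn)
    have mem₁ : (DLV.t i, true) ∈ DLA n i := by simp [DLA]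
    have mem₂ : (DLV.t i, false) ∈ DerivMid n k := Or.inl ⟨i, le_refl k, rfl⟩
    have heq : (DLA n i \ {(DLV.t i, true)}) ∪ (DerivMid n k \ {(DLV.t i, false)})
        = DerivMid n (k + 1) := by
      ext ℓ
      simp only [Set.mem_union, Set.mem_diff, Set.mem_singleton_iff, DerivMid,
        Set.mem_setOf_eq, DLA, Set.mem_insert_iff]
      constructor
      · rintro (⟨hℓ | hℓ | hℓ, hne⟩ | ⟨hℓ | hℓ, hne⟩)
        · exact Or.inr ⟨i, Nat.lt_succ_self k, Or.inl hℓ⟩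
        · exact Or.inr ⟨i, Nat.lt_succ_self k, Or.inr hℓ⟩
        · exact absurd hℓ hne
        · obtain ⟨j, hj, rfl⟩ := hℓ
          refine Or.inl ⟨j, ?_, rfl⟩
          have hji : j ≠ i := fun h => hne (by rw [h])
          have : (j : ℕ) ≠ k := fun h => hji (Fin.ext h)
          omega
        · obtain ⟨j, hj, hj'⟩ := hℓ
          exact Or.inr ⟨j, by omega, hj'⟩
      · rintro (⟨j, hj, rfl⟩ | ⟨j, hj, hj'⟩)
        · refine Or.inr ⟨Or.inl ⟨j, by omega, rfl⟩, ?_⟩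
          simp only [Prod.mk.injEq, DLV.t.injEq, not_and]
          intro h
          have hjk : (j : ℕ) = k := congrArg Fin.val h
          omega
        · by_cases hjk : (j : ℕ) < k
          · refine Or.inr ⟨Or.inr ⟨j, hjk, hj'⟩, ?_⟩
            rcases hj' with rfl | rfl <;> simp
          · have hjeq : j = i := Fin.ext (show (j : ℕ) = k by omega)
            subst hjeq
            rcases hj' with rfl | rfl
            · exact Or.inl ⟨Or.inl rfl, by simp⟩
            · exact Or.inl ⟨Or.inr (Or.inl rfl), by simp⟩
    have hnt : ∀ v : DLV n,
        ¬ ((v, true) ∈ (DLA n i \ {(DLV.t i, true)}) ∪ (DerivMid n k \ {(DLV.t i, false)}) ∧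
           (v, false) ∈ (DLA n i \ {(DLV.t i, true)}) ∪ (DerivMid n k \ {(DLV.t i, false)})) := by
      intro v hv
      rw [heq] at hv
      obtain ⟨h1, h2⟩ := hv
      rcases h2 with ⟨j, _, hj⟩ | ⟨j, _, hj | hj⟩ <;> simp [Prod.ext_iff] at hj
      obtain ⟨rfl, -⟩ := hj
      rcases h1 with ⟨j', _, hj'⟩ | ⟨j', _, hj' | hj'⟩ <;>
        simp [Prod.ext_iff] at hj'
    have := tDeriv.res h₁ h₂ mem₁ mem₂ hnt
    rwa [heq] at this

/-- Clause with all x_j and the u_j for j ≥ m. -/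
def DerivRed (n m : ℕ) : Set (Lit (DLV n)) :=
  {ℓ | (∃ j : Fin n, ℓ = (DLV.x j, true)) ∨
       (∃ j : Fin n, m ≤ (j : ℕ) ∧ ℓ = (DLV.u j, true))}

lemma derivRed (n : ℕ) : ∀ m, m ≤ n → tDeriv n (DerivRed n m) := by
  intro m
  induction m with
  | zero =>
    intro _
    have : DerivRed n 0 = DerivMid n n := by
      ext ℓ
      simp only [DerivRed, DerivMid, Set.mem_setOf_eq]
      constructor
      · rintro (⟨j, rfl⟩ | ⟨j, _, rfl⟩)
        · exact Or.inr ⟨j, j.2, Or.inl rfl⟩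
        · exact Or.inr ⟨j, j.2, Or.inr rfl⟩
      · rintro (⟨j, hj, _⟩ | ⟨j, _, rfl | rfl⟩)
        · exact absurd hj (by have := j.2; omega)
        · exact Or.inl ⟨j, rfl⟩
        · exact Or.inr ⟨j, by omega, rfl⟩
    rw [this]
    exact derivMid n n le_rfl
  | succ m ih =>
    intro hm
    have hmn : m < n := hm
    set i : Fin n := ⟨m, hmn⟩ with hi
    have h := ih (Nat.le_of_lt hmn)
    have hmem : ((DLV.u i, true) : Lit (DLV n)) ∈ DerivRed n m :=
      Or.inr ⟨i, le_refl m, rfl⟩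
    have hnex : ¬ DLexists (DLV.u i : DLV n) := fun h => h
    have hblock : ∀ y, varIn y (DerivRed n m) → DLexists y →
        ¬ DLlvl (DLV.u i : DLV n) < DLlvl y := by
      rintro y ⟨b, hb⟩ hey
      rcases hb with ⟨j, hj⟩ | ⟨j, _, hj⟩
      · have : y = DLV.x j := congrArg Prod.fst hj
        subst this
        simp [DLlvl]
      · have : y = DLV.u j := congrArg Prod.fst hj
        subst this
        exact absurd hey (fun h => h)
    have heq : DerivRed n m \ {((DLV.u i, true) : Lit (DLV n))} = DerivRed n (m + 1) := by
      ext ℓ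
      simp only [Set.mem_diff, Set.mem_singleton_iff, DerivRed, Set.mem_setOf_eq]
      constructor
      · rintro ⟨⟨j, rfl⟩ | ⟨j, hj, rfl⟩, hne⟩
        · exact Or.inl ⟨j, rfl⟩
        · refine Or.inr ⟨j, ?_, rfl⟩
          have hji : j ≠ i := fun h => hne (by rw [h])
          have : (j : ℕ) ≠ m := fun h => hji (Fin.ext h)
          omega
      · rintro (⟨j, rfl⟩ | ⟨j, hj, rfl⟩)
        · exact ⟨Or.inl ⟨j, rfl⟩, by simp⟩
        · refine ⟨Or.inr ⟨j, by omega, rfl⟩, ?_⟩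
          simp only [Prod.mk.injEq, DLV.u.injEq, not_and]
          intro hji
          have : (j : ℕ) = m := congrArg Fin.val hji
          omega
    have := tDeriv.red h hmem hnex hblock
    rwa [heq] at this

lemma part2 {n : ℕ} (hn : 0 < n) :
    ∃ C, tDeriv n C ∧ XClause C ∧ C.ncard = n := by
  refine ⟨DerivRed n n, derivRed n n le_rfl, ?_, ?_⟩
  · constructor
    · exact ⟨(DLV.x ⟨0, hn⟩, true), Or.inl ⟨⟨0, hn⟩, rfl⟩⟩
    · rintro ℓ (⟨j, rfl⟩ | ⟨j, hj, rfl⟩)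
      · exact ⟨j, rfl⟩
      · exact absurd hj (by have := j.2; omega)
  · have heq : DerivRed n n = (fun j : Fin n => ((DLV.x j, true) : Lit (DLV n))) '' Set.univ := by
      ext ℓ
      simp only [DerivRed, Set.mem_setOf_eq, Set.image_univ, Set.mem_range]
      constructor
      · rintro (⟨j, rfl⟩ | ⟨j, hj, rfl⟩)
        · exact ⟨j, rfl⟩
        · exact absurd hj (by have := j.2; omega)
      · rintro ⟨j, rfl⟩
        exact Or.inl ⟨j, rfl⟩
    rw [heq]
    have hinj : Function.Injective (fun j : Fin n => ((DLV.x j, true) : Lit (DLV n))) := by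
      intro a b hab
      simpa [Prod.ext_iff] using hab
    rw [Set.ncard_image_of_injective _ hinj]
    simp [Set.ncard_univ]
/-- The gauge of `DoubleLongEq n` is exactly `n`: every so-derivable X-clause
contains all `n` x-variables, and an X-clause of width `n` is so derivable. -/
theorem stmt5 (n : ℕ) (hn : 0 < n) :
    (∀ C, tDeriv n C → XClause C → ∀ i : Fin n, varIn (DLV.x i) C) ∧
    (∃ C, tDeriv n C ∧ XClause C ∧ C.ncard = n) :=
  ⟨fun _C hD hX i => part1 hn hD hX i, part2 hn⟩

end QCDCLDep
end

section
/- DoubleLongEq_n has a long-distance Q-resolution (LDQ-Res) refutation of size O(n): resolving A_i and B_i on x_i yields C_i = (u_i ∨ ¬u_i ∨ t_i) for each i (a valid long-distance step since u_i is quantified after x_i); resolving T_n successively with C₁,…,Cₙ on t₁,…,tₙ yields the purely universal clause ⋁ᵢ(u_i ∨ ¬u_i), which reduces by universal reduction to the empty clause. -/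
namespace QCDCLDep

variable {V : Type}

/-- Long-distance Q-resolution derivations, with size counting. A resolution on
an existential pivot may merge a universal `u` only if `u` is quantified after
the pivot; existential tautologies are forbidden; universal reduction removes a
universal literal with no existential variable of the clause quantified after it. -/
inductive LDQRes {V : Type} (Φ : QBF V) : Set (Lit V) → ℕ → Prop
  | ax {C} : C ∈ Φ.matrix → LDQRes Φ C 1
  | res {C₁ C₂ s₁ s₂} {x : V} :
      LDQRes Φ C₁ s₁ → LDQRes Φ C₂ s₂ → Φ.isExists x →
      (x, true) ∈ C₁ → (x, false) ∈ C₂ →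
      (∀ y, Φ.isExists y →
        ¬ ((y, true) ∈ (C₁ \ {(x, true)}) ∪ (C₂ \ {(x, false)}) ∧
           (y, false) ∈ (C₁ \ {(x, true)}) ∪ (C₂ \ {(x, false)}))) →
      (∀ u b, ¬ Φ.isExists u → (u, b) ∈ C₁ \ {(x, true)} →
        (u, !b) ∈ C₂ \ {(x, false)} → Φ.lvl x < Φ.lvl u) →
      LDQRes Φ ((C₁ \ {(x, true)}) ∪ (C₂ \ {(x, false)})) (s₁ + s₂ + 1)
  | red {C s} {ℓ : Lit V} :
      LDQRes Φ C s → ℓ ∈ C → ¬ Φ.isExists ℓ.1 →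
      (∀ y, varIn y C → Φ.isExists y → ¬ Φ.lvl ℓ.1 < Φ.lvl y) →
      LDQRes Φ (C \ {ℓ}) (s + 1)

section Proof6

variable {n : ℕ}

lemma DLA_mem (i : Fin n) : DLA n i ∈ (DoubleLongEq n).matrix :=
  Or.inr (Or.inl ⟨i, rfl⟩)

lemma DLB_mem (i : Fin n) : DLB n i ∈ (DoubleLongEq n).matrix :=
  Or.inr (Or.inr (Or.inl ⟨i, rfl⟩))

lemma DLTn_mem : DLTn n ∈ (DoubleLongEq n).matrix := Or.inl rfl

/-- The merged clause Cᵢ. -/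
def DLC (n : ℕ) (i : Fin n) : Set (Lit (DLV n)) :=
  {(DLV.u i, true), (DLV.u i, false), (DLV.t i, true)}

lemma Ci_der (i : Fin n) : LDQRes (DoubleLongEq n) (DLC n i) 3 := by
  have h := LDQRes.res (Φ := DoubleLongEq n) (x := DLV.x i)
    (LDQRes.ax (DLA_mem i)) (LDQRes.ax (DLB_mem i))
    (trivial)
    (by simp [DLA])
    (by simp [DLB])
    (by
      rintro y hy ⟨h1, h0⟩
      simp only [Set.mem_union, Set.mem_diff, Set.mem_singleton_iff, DLA, DLB,
        Set.mem_insert_iff, Prod.mk.injEq] at h1 h0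
      rcases h0 with ⟨h0, -⟩ | ⟨h0, hne⟩
      · rcases h0 with ⟨h, h'⟩ | ⟨h, h'⟩ | ⟨h, h'⟩ <;> simp_all
      · rcases h0 with ⟨h, h'⟩ | ⟨h, h'⟩ | ⟨h, h'⟩ <;> simp_all [DLexists]
        all_goals exact hy)
    (by
      rintro u b hu ⟨h1, hne1⟩ ⟨h2, hne2⟩
      simp only [DLA, DLB, Set.mem_insert_iff, Set.mem_singleton_iff, Prod.mk.injEq] at h1 h2
      show DLlvl (DLV.x i) < DLlvl u
      rcases h1 with ⟨h, h'⟩ | ⟨h, h'⟩ | ⟨h, h'⟩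
      · exact absurd (by simp [h, h']) hne1
      · subst h; exact Nat.zero_lt_one
      · subst h; exact Nat.zero_lt_succ 1)
  have heq : (DLA n i \ {(DLV.x i, true)}) ∪ (DLB n i \ {(DLV.x i, false)}) = DLC n i := by
    ext ⟨v, b⟩
    simp only [DLA, DLB, DLC, Set.mem_union, Set.mem_diff, Set.mem_insert_iff,
      Set.mem_singleton_iff, Prod.mk.injEq]
    constructor
    · rintro (⟨h, hne⟩ | ⟨h, hne⟩) <;> tauto
    · rintro (⟨h, h'⟩ | ⟨h, h'⟩ | ⟨h, h'⟩) <;> subst h <;> subst h' <;> simp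
  rw [heq] at h
  exact h

/-- Intermediate clauses of the chain resolution with Tₙ. -/
def DkC (n k : ℕ) : Set (Lit (DLV n)) :=
  {ℓ | (∃ i : Fin n, (i : ℕ) < k ∧ ℓ.1 = DLV.u i) ∨
       ∃ i : Fin n, k ≤ (i : ℕ) ∧ ℓ = (DLV.t i, false)}

lemma DkC_zero : DkC n 0 = DLTn n := by
  ext ℓ
  simp [DkC, DLTn]

lemma DkC_last : DkC n n = {ℓ : Lit (DLV n) | ∃ i, ℓ.1 = DLV.u i} := by
  ext ℓ
  simp only [DkC, Set.mem_setOf_eq]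
  constructor
  · rintro (⟨i, -, h⟩ | ⟨i, hle, -⟩)
    · exact ⟨i, h⟩
    · exact absurd i.isLt (by omega)
  · rintro ⟨i, h⟩
    exact Or.inl ⟨i, i.isLt, h⟩

lemma Dk_der : ∀ k, k ≤ n → LDQRes (DoubleLongEq n) (DkC n k) (1 + 4 * k) := by
  intro k
  induction k with
  | zero => intro _; rw [DkC_zero]; exact LDQRes.ax DLTn_mem
  | succ k ih =>
    intro hk
    have hkn : k < n := by omega
    set i : Fin n := ⟨k, hkn⟩ with hi
    have hprev := ih (by omega)
    have h := LDQRes.res (Φ := DoubleLongEq n) (x := DLV.t i)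
      (Ci_der i) hprev
      (trivial)
      (by simp [DLC])
      (Or.inr ⟨i, le_refl k, rfl⟩)
      (by
        rintro y hy ⟨h1, h0⟩
        simp only [Set.mem_union, Set.mem_diff, Set.mem_singleton_iff, DLC, DkC,
          Set.mem_insert_iff, Set.mem_setOf_eq, Prod.mk.injEq] at h1 h0
        rcases h0 with ⟨h0, -⟩ | ⟨h0, hne⟩
        · rcases h0 with ⟨h, h'⟩ | ⟨h, h'⟩ | ⟨h, h'⟩ <;> simp_all
          exact hy
        · rcases h0 with ⟨j, -, hj⟩ | ⟨j, -, hj, -⟩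
          · subst hj; exact hy
          · subst hj
            rcases h1 with ⟨h1, hne1⟩ | ⟨h1, -⟩
            · rcases h1 with ⟨h, h'⟩ | ⟨h, h'⟩ | ⟨h, h'⟩ <;> simp_all
            · rcases h1 with ⟨j', -, hj'⟩ | ⟨j', -, hj', hb⟩ <;> simp_all)
      (by
        rintro u b hu ⟨h1, hne1⟩ ⟨h2, hne2⟩
        simp only [DLC, DkC, Set.mem_insert_iff, Set.mem_singleton_iff,
          Set.mem_setOf_eq, Prod.mk.injEq] at h1 h2
        exfalso
        rcases h1 with ⟨h, -⟩ | ⟨h, -⟩ | ⟨h, h'⟩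
        · subst h
          rcases h2 with ⟨j, hjk, hj⟩ | ⟨j, -, hj, -⟩
          · simp only [DLV.u.injEq] at hj
            subst hj; simp [hi] at hjk
          · simp at hj
        · subst h
          rcases h2 with ⟨j, hjk, hj⟩ | ⟨j, -, hj, -⟩
          · simp only [DLV.u.injEq] at hj
            subst hj; simp [hi] at hjk
          · simp at hj
        · exact hne1 (by simp [h, h']))
    have heq : (DLC n i \ {(DLV.t i, true)}) ∪ (DkC n k \ {(DLV.t i, false)})
        = DkC n (k + 1) := by
      ext ⟨v, b⟩
      simp only [DLC, DkC, Set.mem_union, Set.mem_diff, Set.mem_insert_iff,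
        Set.mem_singleton_iff, Set.mem_setOf_eq, Prod.mk.injEq]
      constructor
      · rintro (⟨h, hne⟩ | ⟨h, hne⟩)
        · rcases h with ⟨h, h'⟩ | ⟨h, h'⟩ | ⟨h, h'⟩
          · exact Or.inl ⟨i, by simp [hi], h⟩
          · exact Or.inl ⟨i, by simp [hi], h⟩
          · exact absurd ⟨h, h'⟩ hne
        · rcases h with ⟨j, hjk, hj⟩ | ⟨j, hjk, hj, hb⟩
          · exact Or.inl ⟨j, by omega, hj⟩
          · refine Or.inr ⟨j, ?_, hj, hb⟩
            rcases Nat.lt_or_ge k j with h' | h'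
            · omega
            · have : (j : ℕ) = k := by omega
              exfalso
              exact hne ⟨by rw [hj]; congr 1; exact Fin.ext (by simp [hi, this]), hb⟩
      · rintro (⟨j, hjk, hj⟩ | ⟨j, hjk, hj, hb⟩)
        · rcases Nat.lt_or_ge (j : ℕ) k with h' | h'
          · exact Or.inr ⟨Or.inl ⟨j, h', hj⟩, fun ⟨h, _⟩ => by simp [hj] at h⟩
          · have hji : j = i := Fin.ext (by simp [hi]; omega)
            subst hji
            cases b
            · exact Or.inl ⟨Or.inr (Or.inl ⟨hj, rfl⟩), fun ⟨h, hb⟩ => by simp [hj] at h⟩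
            · exact Or.inl ⟨Or.inl ⟨hj, rfl⟩, fun ⟨h, hb⟩ => by simp [hj] at h⟩
        · refine Or.inr ⟨Or.inr ⟨j, by omega, hj, hb⟩, ?_⟩
          rintro ⟨h, -⟩
          rw [hj] at h
          simp only [DLV.t.injEq] at h
          have : (j : ℕ) = k := by rw [h]
          omega
    rw [heq] at h
    have : 3 + (1 + 4 * k) + 1 = 1 + 4 * (k + 1) := by ring
    rwa [this] at h

lemma red_all {W : Type} (Φ : QBF W) {C : Set (Lit W)} (hfin : C.Finite) :
    (∀ ℓ ∈ C, ¬ Φ.isExists ℓ.1) → ∀ s, LDQRes Φ C s →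
      ∃ s' ≤ s + C.ncard, LDQRes Φ ∅ s' := by
  refine Set.Finite.induction_on
    (motive := fun C _ => (∀ ℓ ∈ C, ¬ Φ.isExists ℓ.1) → ∀ s, LDQRes Φ C s →
      ∃ s' ≤ s + C.ncard, LDQRes Φ ∅ s') C hfin
    (fun _ s h => ⟨s, Nat.le_add_right _ _, h⟩) ?_
  intro a s' ha hfin ih huniv d hd
  have hred := LDQRes.red hd (Set.mem_insert a s') (huniv a (Set.mem_insert a s'))
    (by
      rintro y ⟨b, hy⟩ hey
      exact absurd hey (huniv (y, b) hy))
  rw [Set.insert_sdiff_self_of_notMem ha] at hred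
  obtain ⟨s'', hle, h⟩ := ih (fun ℓ hℓ => huniv ℓ (Set.mem_insert_of_mem a hℓ)) _ hred
  refine ⟨s'', ?_, h⟩
  rw [Set.ncard_insert_of_notMem ha hfin]
  omega

lemma Dn_finite : ({ℓ : Lit (DLV n) | ∃ i, ℓ.1 = DLV.u i}).Finite := by
  have : {ℓ : Lit (DLV n) | ∃ i, ℓ.1 = DLV.u i}
      = (fun p : Fin n × Bool => ((DLV.u p.1, p.2) : Lit (DLV n))) '' Set.univ := by
    ext ⟨v, b⟩
    simp only [Set.mem_setOf_eq, Set.image_univ, Set.mem_range, Prod.mk.injEq, Prod.exists]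
    constructor
    · rintro ⟨i, hi⟩; exact ⟨i, b, hi.symm, rfl⟩
    · rintro ⟨i, b', h, h'⟩; exact ⟨i, h.symm⟩
  rw [this]
  exact Set.finite_univ.image _

lemma Dn_ncard_le : ({ℓ : Lit (DLV n) | ∃ i, ℓ.1 = DLV.u i}).ncard ≤ 2 * n := by
  have h : {ℓ : Lit (DLV n) | ∃ i, ℓ.1 = DLV.u i}
      ⊆ (fun p : Fin n × Bool => ((DLV.u p.1, p.2) : Lit (DLV n))) '' Set.univ := by
    rintro ⟨v, b⟩ ⟨i, hi⟩
    exact ⟨(i, b), Set.mem_univ _, by simp [hi.symm]⟩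
  calc ({ℓ : Lit (DLV n) | ∃ i, ℓ.1 = DLV.u i}).ncard
      ≤ ((fun p : Fin n × Bool => ((DLV.u p.1, p.2) : Lit (DLV n))) '' Set.univ).ncard :=
        Set.ncard_le_ncard h (Set.finite_univ.image _)
    _ ≤ (Set.univ : Set (Fin n × Bool)).ncard := Set.ncard_image_le Set.finite_univ
    _ = 2 * n := by simp [Set.ncard_univ, Nat.card_eq_fintype_card]; ring

end Proof6

/-- `DoubleLongEq n` has an LDQ-Res refutation of size O(n): the merged clauses
`Cᵢ = (uᵢ ∨ ¬uᵢ ∨ tᵢ)` are derivable, the purely universal clause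
`⋁ᵢ(uᵢ ∨ ¬uᵢ)` is derivable, and the empty clause is derivable in size ≤ c·(n+1). -/
theorem stmt6 :
    ∃ c : ℕ, ∀ n : ℕ,
      (∀ i : Fin n, ∃ s, LDQRes (DoubleLongEq n)
          ({(DLV.u i, true), (DLV.u i, false), (DLV.t i, true)} : Set (Lit (DLV n))) s) ∧
      (∃ s, LDQRes (DoubleLongEq n) {ℓ : Lit (DLV n) | ∃ i, ℓ.1 = DLV.u i} s) ∧
      (∃ s ≤ c * (n + 1), LDQRes (DoubleLongEq n) (∅ : Set (Lit (DLV n))) s) := by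
  refine ⟨6, fun n => ?_⟩
  have hD : LDQRes (DoubleLongEq n) {ℓ : Lit (DLV n) | ∃ i, ℓ.1 = DLV.u i} (1 + 4 * n) :=
    DkC_last ▸ Dk_der n le_rfl
  refine ⟨fun i => ⟨3, Ci_der i⟩, ⟨1 + 4 * n, hD⟩, ?_⟩
  obtain ⟨s', hle, h⟩ := red_all _ Dn_finite
    (by rintro ⟨v, b⟩ ⟨i, hi⟩; simp only at hi; subst hi; exact fun h => h) _ hD
  have hn := Dn_ncard_le (n := n)
  exact ⟨s', by omega, h⟩

end QCDCLDep
end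

section
/- For the formula Φ = TwoPHPandCT_n, the reflexive resolution path dependency scheme is empty: D^rrs(Φ) = ∅. In particular, neither (u, x_i), (u, y_i) nor (v, z_j) is in D^rrs(Φ) for any i, j. -/
namespace QCDCLDep

variable {V : Type}

/-- Variables of `TwoPHPandCT n`, in prefix order ∀u ∃x⃗ ∃y⃗ ∀v ∃z₁ ∃z₂. -/
inductive TPV (n : ℕ) where
  | u | x (i : Fin (n+1)) (j : Fin n) | y (i : Fin (n+1)) (j : Fin n) | v | z1 | z2

def TPlvl {n : ℕ} : TPV n → ℕ
  | .u => 0 | .x _ _ => 1 | .y _ _ => 2 | .v => 3 | .z1 => 4 | .z2 => 4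

def TPexists {n : ℕ} : TPV n → Prop
  | .u => False | .v => False | _ => True

/-- The QBF `TwoPHPandCT n`. -/
def TwoPHPandCT (n : ℕ) : QBF (TPV n) where
  isExists := TPexists
  lvl := TPlvl
  matrix :=
    {C | ∃ C₀ ∈ PHPclauses n (fun i j => TPV.x i j), C = insert (TPV.u, true) C₀} ∪
    {C | ∃ C₀ ∈ PHPclauses n (fun i j => TPV.y i j), C = insert (TPV.u, false) C₀} ∪
    {C | ∃ s₁ s₂ : Bool,
        C = ({(TPV.v, true), (TPV.z1, s₁), (TPV.z2, s₂)} : Set (Lit (TPV n)))}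

lemma php_vars {n : ℕ} (z : Fin (n+1) → Fin n → V) {C} (h : C ∈ PHPclauses n z) :
    ∀ ℓ ∈ C, ∃ i j, ℓ.1 = z i j := by
  rcases h with ⟨i, rfl⟩ | ⟨i, i', j, _, rfl⟩
  · rintro ℓ ⟨j, rfl⟩; exact ⟨i, j, rfl⟩
  · intro ℓ hℓ
    rcases hℓ with rfl | rfl
    exacts [⟨i, j, rfl⟩, ⟨i', j, rfl⟩]

lemma clause_cases {n : ℕ} {C : Set (Lit (TPV n))} (h : C ∈ (TwoPHPandCT n).matrix) :
    ((∀ ℓ ∈ C, ℓ.1 = TPV.u ∨ ∃ i j, ℓ.1 = TPV.x i j) ∧ (TPV.u, false) ∉ C) ∨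
    ((∀ ℓ ∈ C, ℓ.1 = TPV.u ∨ ∃ i j, ℓ.1 = TPV.y i j) ∧ (TPV.u, true) ∉ C) ∨
    ((∀ ℓ ∈ C, ℓ.1 = TPV.v ∨ ℓ.1 = TPV.z1 ∨ ℓ.1 = TPV.z2) ∧ (TPV.v, false) ∉ C) := by
  rcases h with (⟨C₀, h₀, rfl⟩ | ⟨C₀, h₀, rfl⟩) | ⟨s₁, s₂, rfl⟩
  · left
    constructor
    · intro ℓ hℓ
      rcases hℓ with rfl | hℓ
      · exact Or.inl rfl
      · exact Or.inr (php_vars _ h₀ ℓ hℓ)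
    · intro hmem
      rcases hmem with h | h
      · simp at h
      · obtain ⟨i, j, hij⟩ := php_vars _ h₀ _ h; simp at hij
  · right; left
    constructor
    · intro ℓ hℓ
      rcases hℓ with rfl | hℓ
      · exact Or.inl rfl
      · exact Or.inr (php_vars _ h₀ ℓ hℓ)
    · intro hmem
      rcases hmem with h | h
      · simp at h
      · obtain ⟨i, j, hij⟩ := php_vars _ h₀ _ h; simp at hij
  · right; right
    constructor
    · intro ℓ hℓ
      rcases hℓ with rfl | rfl | rfl <;> simp
    · intro hmem
      rcases hmem with h | h | h <;> simp at h

lemma conn_u_true {n : ℕ} {ℓ : Lit (TPV n)} (h : conn (TwoPHPandCT n) (TPV.u, true) ℓ) :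
    ℓ.1 = TPV.u ∨ ∃ i j, ℓ.1 = TPV.x i j := by
  induction h with
  | base hC hs hl _ =>
    rcases clause_cases hC with ⟨h1, _⟩ | ⟨_, h2⟩ | ⟨h3, _⟩
    · exact h1 _ hl
    · exact absurd hs h2
    · rcases h3 _ hs with h | h | h <;> simp at h
  | step hc hd hC hneg hl' _ ih =>
    rcases ih with hu | ⟨i, j, hx⟩
    · rw [hu] at hd; exact absurd hd.2.2 (by simp [TwoPHPandCT, TPexists])
    · rcases clause_cases hC with ⟨h1, _⟩ | ⟨h2, _⟩ | ⟨h3, _⟩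
      · exact h1 _ hl'
      · rcases h2 _ hneg with h | ⟨i', j', h⟩ <;>
          simp [negLit, hx] at h
      · rcases h3 _ hneg with h | h | h <;> simp [negLit, hx] at h

lemma conn_u_false {n : ℕ} {ℓ : Lit (TPV n)} (h : conn (TwoPHPandCT n) (TPV.u, false) ℓ) :
    ℓ.1 = TPV.u ∨ ∃ i j, ℓ.1 = TPV.y i j := by
  induction h with
  | base hC hs hl _ =>
    rcases clause_cases hC with ⟨_, h1⟩ | ⟨h2, _⟩ | ⟨h3, _⟩
    · exact absurd hs h1
    · exact h2 _ hl
    · rcases h3 _ hs with h | h | h <;> simp at h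
  | step hc hd hC hneg hl' _ ih =>
    rcases ih with hu | ⟨i, j, hy⟩
    · rw [hu] at hd; exact absurd hd.2.2 (by simp [TwoPHPandCT, TPexists])
    · rcases clause_cases hC with ⟨h1, _⟩ | ⟨h2, _⟩ | ⟨h3, _⟩
      · rcases h1 _ hneg with h | ⟨i', j', h⟩ <;>
          simp [negLit, hy] at h
      · exact h2 _ hl'
      · rcases h3 _ hneg with h | h | h <;> simp [negLit, hy] at h

lemma conn_v_false {n : ℕ} {ℓ : Lit (TPV n)} :
    ¬ conn (TwoPHPandCT n) (TPV.v, false) ℓ := by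
  intro h
  induction h with
  | base hC hs _ _ =>
    rcases clause_cases hC with ⟨h1, _⟩ | ⟨h2, _⟩ | ⟨_, h3⟩
    · rcases h1 _ hs with h | ⟨i, j, h⟩ <;> simp at h
    · rcases h2 _ hs with h | ⟨i, j, h⟩ <;> simp at h
    · exact h3 hs
  | step _ _ _ _ _ _ ih => exact ih

lemma main_empty {n : ℕ} (a b : TPV n) : ¬ Drrs (TwoPHPandCT n) a b := by
  rintro ⟨⟨hlvl, hne, _⟩, hconn⟩
  cases a with
  | u =>
    have h1 : b = TPV.u ∨ ∃ i j, b = TPV.x i j := by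
      rcases hconn with ⟨h, _⟩ | ⟨h, _⟩ <;> exact conn_u_true h
    have h2 : b = TPV.u ∨ ∃ i j, b = TPV.y i j := by
      rcases hconn with ⟨_, h⟩ | ⟨_, h⟩ <;> exact conn_u_false h
    rcases h1 with rfl | ⟨i, j, rfl⟩
    · simp [TwoPHPandCT, TPlvl] at hlvl
    · rcases h2 with h | ⟨i', j', h⟩ <;> simp at h
  | v =>
    rcases hconn with ⟨_, h⟩ | ⟨_, h⟩ <;> exact conn_v_false h
  | x i j => exact hne trivial
  | y i j => exact hne trivial
  | z1 => exact hne trivial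
  | z2 => exact hne trivial

/-- `D^rrs(TwoPHPandCT n) = ∅`; in particular none of `(u,xᵢⱼ)`, `(u,yᵢⱼ)`,
`(v,z₁)`, `(v,z₂)` is in `D^rrs`. -/
theorem stmt14 (n : ℕ) :
    (∀ a b, ¬ Drrs (TwoPHPandCT n) a b) ∧
    (∀ i j, ¬ Drrs (TwoPHPandCT n) TPV.u (TPV.x i j) ∧
            ¬ Drrs (TwoPHPandCT n) TPV.u (TPV.y i j)) ∧
    ¬ Drrs (TwoPHPandCT n) TPV.v TPV.z1 ∧
    ¬ Drrs (TwoPHPandCT n) TPV.v TPV.z2 := by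
  exact ⟨main_empty, fun i j => ⟨main_empty _ _, main_empty _ _⟩,
    main_empty _ _, main_empty _ _⟩

end QCDCLDep
end

section
/- For the formula Φ = TwoPHPandCT_n, the standard dependency scheme is D^std(Φ) = {(u,x_i) : i ∈ [s_n]} ∪ {(u,y_i) : i ∈ [s_n]} ∪ {(v,z₁), (v,z₂)}. In particular, (x_i, v) ∉ D^std(Φ) and (y_i, v) ∉ D^std(Φ) for all i — the v,z-block is D^std-independent of the u,x,y-block. -/
namespace QCDCLDep

variable {V : Type}

lemma php_var {n : ℕ} {z : Fin (n+1) → Fin n → TPV n} {C₀ : Set (Lit (TPV n))}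
    (h : C₀ ∈ PHPclauses n z) {ℓ : Lit (TPV n)} (hl : ℓ ∈ C₀) :
    ∃ i j, ℓ.1 = z i j := by
  rcases h with ⟨i, rfl⟩ | ⟨i, i', j, _, rfl⟩
  · rcases hl with ⟨j, rfl⟩; exact ⟨i, j, rfl⟩
  · rcases hl with rfl | rfl
    · exact ⟨i, j, rfl⟩
    · exact ⟨i', j, rfl⟩

lemma mem_matrix {n : ℕ} {C : Set (Lit (TPV n))} (h : C ∈ (TwoPHPandCT n).matrix) :
    (∃ C₀ ∈ PHPclauses n (fun i j => TPV.x i j), C = insert (TPV.u, true) C₀) ∨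
    (∃ C₀ ∈ PHPclauses n (fun i j => TPV.y i j), C = insert (TPV.u, false) C₀) ∨
    (∃ s₁ s₂ : Bool,
        C = ({(TPV.v, true), (TPV.z1, s₁), (TPV.z2, s₂)} : Set (Lit (TPV n)))) := by
  rcases h with (h | h) | h
  · exact Or.inl h
  · exact Or.inr (Or.inl h)
  · exact Or.inr (Or.inr h)

lemma reach_u {n : ℕ} {C : Set (Lit (TPV n))}
    (h : stdReach (TwoPHPandCT n) TPV.u C) :
    ∀ ℓ ∈ C, ℓ.1 = TPV.u ∨ (∃ i j, ℓ.1 = TPV.x i j) ∨ (∃ i j, ℓ.1 = TPV.y i j) := by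
  induction h with
  | @base C hC hu =>
    intro ℓ hl
    rcases mem_matrix hC with ⟨C₀, h0, rfl⟩ | ⟨C₀, h0, rfl⟩ | ⟨s₁, s₂, rfl⟩
    · rcases hl with rfl | hl
      · exact Or.inl rfl
      · exact Or.inr (Or.inl (php_var h0 hl))
    · rcases hl with rfl | hl
      · exact Or.inl rfl
      · exact Or.inr (Or.inr (php_var h0 hl))
    · rcases hu with ⟨b, hb⟩
      rcases hb with hb | hb | hb <;> simp_all
  | @step C C' w hC hC' hdw hwC hwC' ih =>
    intro ℓ hl
    rcases hwC with ⟨b, hb⟩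
    have hw := ih (w, b) hb
    rcases mem_matrix hC' with ⟨C₀, h0, rfl⟩ | ⟨C₀, h0, rfl⟩ | ⟨s₁, s₂, rfl⟩
    · rcases hl with rfl | hl
      · exact Or.inl rfl
      · exact Or.inr (Or.inl (php_var h0 hl))
    · rcases hl with rfl | hl
      · exact Or.inl rfl
      · exact Or.inr (Or.inr (php_var h0 hl))
    · exfalso
      rcases hwC' with ⟨b', hb'⟩
      rcases hb' with hb' | hb' | hb' <;>
        rcases hw with hw | ⟨i, j, hw⟩ | ⟨i, j, hw⟩ <;> simp_all

/-- `D^std(TwoPHPandCT n) = {(u,xᵢⱼ)} ∪ {(u,yᵢⱼ)} ∪ {(v,z₁),(v,z₂)}`; in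
particular `(xᵢⱼ,v)` and `(yᵢⱼ,v)` are not in `D^std`. -/
theorem stmt15 (n : ℕ) :
    (Dstd (TwoPHPandCT n) = fun a b =>
      (a = TPV.u ∧ ((∃ i j, b = TPV.x i j) ∨ (∃ i j, b = TPV.y i j))) ∨
      (a = TPV.v ∧ (b = TPV.z1 ∨ b = TPV.z2))) ∧
    (∀ i j, ¬ Dstd (TwoPHPandCT n) (TPV.x i j) TPV.v ∧
            ¬ Dstd (TwoPHPandCT n) (TPV.y i j) TPV.v) := by
  constructor
  · funext a b
    apply propext
    constructor
    · rintro ⟨⟨hlvl, hnE, hE⟩, C, hreach, hbC⟩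
      cases a with
      | u =>
        left
        refine ⟨rfl, ?_⟩
        rcases hbC with ⟨s, hs⟩
        rcases reach_u hreach (b, s) hs with hb | ⟨i, j, hb⟩ | ⟨i, j, hb⟩
        · subst hb; exact absurd hE (by simp [TwoPHPandCT, TPexists])
        · exact Or.inl ⟨i, j, hb⟩
        · exact Or.inr ⟨i, j, hb⟩
      | x i j => exact absurd (trivial : TPexists (TPV.x i j)) hnE
      | y i j => exact absurd (trivial : TPexists (TPV.y i j)) hnE
      | v =>
        right
        refine ⟨rfl, ?_⟩
        cases b <;> simp_all [TwoPHPandCT, TPlvl]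
      | z1 => exact absurd (trivial : TPexists (TPV.z1 : TPV n)) hnE
      | z2 => exact absurd (trivial : TPexists (TPV.z2 : TPV n)) hnE
    · rintro (⟨rfl, ⟨i, j, rfl⟩ | ⟨i, j, rfl⟩⟩ | ⟨rfl, rfl | rfl⟩)
      · refine ⟨⟨by simp [TwoPHPandCT, TPlvl], fun h => h, trivial⟩, ?_⟩
        refine ⟨insert (TPV.u, true) {ℓ | ∃ j', ℓ = (TPV.x i j', true)},
          stdReach.base ?_ ⟨true, Or.inl rfl⟩, ⟨true, Or.inr ⟨j, rfl⟩⟩⟩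
        exact Or.inl (Or.inl ⟨_, Or.inl ⟨i, rfl⟩, rfl⟩)
      · refine ⟨⟨by simp [TwoPHPandCT, TPlvl], fun h => h, trivial⟩, ?_⟩
        refine ⟨insert (TPV.u, false) {ℓ | ∃ j', ℓ = (TPV.y i j', true)},
          stdReach.base ?_ ⟨false, Or.inl rfl⟩, ⟨true, Or.inr ⟨j, rfl⟩⟩⟩
        exact Or.inl (Or.inr ⟨_, Or.inl ⟨i, rfl⟩, rfl⟩)
      · refine ⟨⟨by simp [TwoPHPandCT, TPlvl], fun h => h, trivial⟩, ?_⟩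
        refine ⟨({(TPV.v, true), (TPV.z1, true), (TPV.z2, true)} : Set (Lit (TPV n))),
          stdReach.base (Or.inr ⟨true, true, rfl⟩) ⟨true, Or.inl rfl⟩,
          ⟨true, Or.inr (Or.inl rfl)⟩⟩
      · refine ⟨⟨by simp [TwoPHPandCT, TPlvl], fun h => h, trivial⟩, ?_⟩
        refine ⟨({(TPV.v, true), (TPV.z1, true), (TPV.z2, true)} : Set (Lit (TPV n))),
          stdReach.base (Or.inr ⟨true, true, rfl⟩) ⟨true, Or.inl rfl⟩,
          ⟨true, Or.inr (Or.inr rfl)⟩⟩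
  · intro i j
    constructor
    · rintro ⟨⟨_, hnE, _⟩, _⟩
      exact hnE (trivial : TPexists (TPV.x i j))
    · rintro ⟨⟨_, hnE, _⟩, _⟩
      exact hnE (trivial : TPexists (TPV.y i j))

end QCDCLDep
end

section
/- For any PCNF QBF Φ and D ∈ {D^std, D^rrs}: let Ψ = red-D^trv(Φ) (every clause reduced by trivial universal reduction, same prefix). Then for any pair of variables (x,y) both occurring in the matrix of Ψ, (x,y) ∈ D(Ψ) if and only if (x,y) ∈ D(Φ). -/
namespace QCDCLDep

variable {V : Type}

lemma redD_subset (Φ : QBF V) (D : V → V → Prop) (C : Set (Lit V)) :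
    redD Φ D C ⊆ C := fun _ h => h.1

lemma mem_redD_of_exists (Φ : QBF V) {C : Set (Lit V)} {ℓ : Lit V}
    (hℓ : ℓ ∈ C) (he : Φ.isExists ℓ.1) : ℓ ∈ redD Φ (Dtrv Φ) C :=
  ⟨hℓ, Or.inl he⟩

lemma Dtrv_red (Φ : QBF V) (a b : V) :
    Dtrv (redQBF Φ (Dtrv Φ)) a b ↔ Dtrv Φ a b := Iff.rfl

/-- Forward transfer of stdReach: if a clause is reachable in `Φ` and contains
an existential variable `z` with `Dtrv Φ x z`, its reduction is reachable. -/
lemma stdReach_red (Φ : QBF V) {x : V} {C : Set (Lit V)}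
    (h : stdReach Φ x C) :
    ∀ z, Dtrv Φ x z → varIn z C → stdReach (redQBF Φ (Dtrv Φ)) x (redD Φ (Dtrv Φ) C) := by
  induction h with
  | base hC hx =>
    intro z hz ⟨b, hb⟩
    refine stdReach.base ⟨_, hC, rfl⟩ ?_
    obtain ⟨bx, hbx⟩ := hx
    exact ⟨bx, hbx, Or.inr ⟨z, ⟨b, hb⟩, hz.2.2, hz⟩⟩
  | @step C C' z0 _ hC' hz0 hzC hzC' ih =>
    intro z hz _
    obtain ⟨b0, hb0⟩ := hzC
    obtain ⟨b0', hb0'⟩ := hzC'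
    refine stdReach.step (ih z0 hz0 ⟨b0, hb0⟩) ⟨_, hC', rfl⟩ hz0 ?_ ?_
    · exact ⟨b0, mem_redD_of_exists Φ hb0 hz0.2.2⟩
    · exact ⟨b0', mem_redD_of_exists Φ hb0' hz0.2.2⟩

/-- Backward transfer of stdReach. -/
lemma stdReach_unred (Φ : QBF V) {x : V} {D : Set (Lit V)}
    (h : stdReach (redQBF Φ (Dtrv Φ)) x D) :
    ∃ C, D = redD Φ (Dtrv Φ) C ∧ stdReach Φ x C := by
  induction h with
  | base hD hx =>
    obtain ⟨C, hC, rfl⟩ := hD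
    obtain ⟨b, hb⟩ := hx
    exact ⟨C, rfl, stdReach.base hC ⟨b, redD_subset Φ _ C hb⟩⟩
  | @step D D' z _ hD' hz hzD hzD' ih =>
    obtain ⟨C, rfl, hC⟩ := ih
    obtain ⟨C', hC', rfl⟩ := hD'
    obtain ⟨b, hb⟩ := hzD
    obtain ⟨b', hb'⟩ := hzD'
    exact ⟨C', rfl, stdReach.step hC hC' hz ⟨b, redD_subset Φ _ C hb⟩
      ⟨b', redD_subset Φ _ C' hb'⟩⟩

/-- Forward transfer of conn: if the endpoint trivially depends on the source. -/
lemma conn_red (Φ : QBF V) {s ℓ : Lit V} (h : conn Φ s ℓ) (hd : Dtrv Φ s.1 ℓ.1) :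
    conn (redQBF Φ (Dtrv Φ)) s ℓ := by
  induction h with
  | @base C ℓ hC hs hℓ hne =>
    refine conn.base (C := redD Φ (Dtrv Φ) C) ⟨C, hC, rfl⟩ ?_ ?_ hne
    · exact ⟨hs, Or.inr ⟨ℓ.1, ⟨ℓ.2, hℓ⟩, hd.2.2, hd⟩⟩
    · exact mem_redD_of_exists Φ hℓ hd.2.2
  | @step C ℓ ℓ' hcon hdℓ hC hneg hℓ' hne ih =>
    exact conn.step (ih hdℓ) hdℓ ⟨C, hC, rfl⟩
      (mem_redD_of_exists Φ hneg hdℓ.2.2)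
      (mem_redD_of_exists Φ hℓ' hd.2.2) hne

/-- Backward transfer of conn. -/
lemma conn_unred (Φ : QBF V) {s ℓ : Lit V} (h : conn (redQBF Φ (Dtrv Φ)) s ℓ) :
    conn Φ s ℓ := by
  induction h with
  | base hD hs hℓ hne =>
    obtain ⟨C, hC, rfl⟩ := hD
    exact conn.base hC (redD_subset Φ _ C hs) (redD_subset Φ _ C hℓ) hne
  | step _ hd hD hneg hℓ' hne ih =>
    obtain ⟨C, hC, rfl⟩ := hD
    exact conn.step ih hd hC (redD_subset Φ _ C hneg) (redD_subset Φ _ C hℓ') hne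

/-- For `D ∈ {D^std, D^rrs}` and `Ψ = red-D^trv(Φ)`: for variables occurring in
the matrix of `Ψ`, `(x,y) ∈ D(Ψ) ↔ (x,y) ∈ D(Φ)`. -/
theorem stmt17 {V : Type} (Φ : QBF V) (x y : V)
    (hx : ∃ C ∈ (redQBF Φ (Dtrv Φ)).matrix, varIn x C)
    (hy : ∃ C ∈ (redQBF Φ (Dtrv Φ)).matrix, varIn y C) :
    (Dstd (redQBF Φ (Dtrv Φ)) x y ↔ Dstd Φ x y) ∧
    (Drrs (redQBF Φ (Dtrv Φ)) x y ↔ Drrs Φ x y) := by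
  constructor
  · constructor
    · rintro ⟨hd, D, hr, b, hb⟩
      obtain ⟨C, rfl, hC⟩ := stdReach_unred Φ hr
      exact ⟨hd, C, hC, b, redD_subset Φ _ C hb⟩
    · rintro ⟨hd, C, hr, b, hb⟩
      refine ⟨hd, redD Φ (Dtrv Φ) C, stdReach_red Φ hr y hd ⟨b, hb⟩, b,
        mem_redD_of_exists Φ hb hd.2.2⟩
  · constructor
    · rintro ⟨hd, hc | hc⟩
      · exact ⟨hd, Or.inl ⟨conn_unred Φ hc.1, conn_unred Φ hc.2⟩⟩
      · exact ⟨hd, Or.inr ⟨conn_unred Φ hc.1, conn_unred Φ hc.2⟩⟩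
    · rintro ⟨hd, hc | hc⟩
      · exact ⟨hd, Or.inl ⟨conn_red Φ hc.1 hd, conn_red Φ hc.2 hd⟩⟩
      · exact ⟨hd, Or.inr ⟨conn_red Φ hc.1 hd, conn_red Φ hc.2 hd⟩⟩

end QCDCLDep
end

section
/- In the formula StdDepTrap_n, the pair (u, y) is NOT in D^std(StdDepTrap_n), even though y is existential and quantified after the universal u: every clause containing u (namely only (¬c ∨ u ∨ ¬x)) contains, besides u, only the variables c (quantified before u) and x, and x occurs in no other clause than (¬a ∨ x) and (¬c ∨ u ∨ ¬x), where a is quantified before u; hence no D^std connection sequence from u reaches y. -/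
namespace QCDCLDep

variable {V : Type}

/-- Variables of `StdDepTrap n`, in prefix order
∃b ∀w₁ ∃z⃗ ∀w₂ ∃a ∃d ∃c ∀u ∃x ∃y ∃p ∃e₁ ∃e₂. -/
inductive SDV (n : ℕ) where
  | b | w1 | z (i : Fin (n+1)) (j : Fin n) | w2 | a | d | c | u | x | y | p | e1 | e2

def SDlvl {n : ℕ} : SDV n → ℕ
  | .b => 0 | .w1 => 1 | .z _ _ => 2 | .w2 => 3 | .a => 4 | .d => 5 | .c => 6
  | .u => 7 | .x => 8 | .y => 9 | .p => 10 | .e1 => 11 | .e2 => 12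

def SDexists {n : ℕ} : SDV n → Prop
  | .w1 => False | .w2 => False | .u => False | _ => True

/-- The QBF `StdDepTrap n`. -/
def StdDepTrap (n : ℕ) : QBF (SDV n) where
  isExists := SDexists
  lvl := SDlvl
  matrix :=
    {C | ∃ C₀ ∈ PHPclauses n (fun i j => SDV.z i j), C = insert (SDV.b, false) C₀} ∪
    {({(SDV.y, true), (SDV.p, true)} : Set (Lit (SDV n))),
     {(SDV.y, true), (SDV.p, false)},
     {(SDV.w1, true), (SDV.e1, true)},
     {(SDV.w2, true), (SDV.e2, true)},
     {(SDV.b, true), (SDV.y, true)},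
     {(SDV.a, true), (SDV.y, false)},
     {(SDV.a, false), (SDV.x, true)},
     {(SDV.c, false), (SDV.u, true), (SDV.x, false)},
     {(SDV.d, true), (SDV.c, true), (SDV.y, false)},
     {(SDV.d, false), (SDV.c, true), (SDV.y, false)}}

lemma sd_mem_cases {n : ℕ} {C : Set (Lit (SDV n))} (hC : C ∈ (StdDepTrap n).matrix) :
    (∃ C₀ ∈ PHPclauses n (fun i j => SDV.z i j), C = insert (SDV.b, false) C₀) ∨
    C = {(SDV.y, true), (SDV.p, true)} ∨
    C = {(SDV.y, true), (SDV.p, false)} ∨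
    C = {(SDV.w1, true), (SDV.e1, true)} ∨
    C = {(SDV.w2, true), (SDV.e2, true)} ∨
    C = {(SDV.b, true), (SDV.y, true)} ∨
    C = {(SDV.a, true), (SDV.y, false)} ∨
    C = {(SDV.a, false), (SDV.x, true)} ∨
    C = {(SDV.c, false), (SDV.u, true), (SDV.x, false)} ∨
    C = {(SDV.d, true), (SDV.c, true), (SDV.y, false)} ∨
    C = {(SDV.d, false), (SDV.c, true), (SDV.y, false)} := by
  rcases hC with h | h
  · exact Or.inl h
  · right
    simpa [Set.mem_insert_iff, Set.mem_singleton_iff] using h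

lemma php_no_ux {n : ℕ} {C₀ : Set (Lit (SDV n))}
    (h : C₀ ∈ PHPclauses n (fun i j => SDV.z i j)) {v : SDV n} (hv : v = SDV.u ∨ v = SDV.x) :
    ¬ varIn v (insert (SDV.b, false) C₀) := by
  rintro ⟨bb, hb⟩
  rcases h with ⟨i, rfl⟩ | ⟨i, i', j, _, rfl⟩ <;>
    rcases hv with rfl | rfl <;>
      simp [Set.mem_insert_iff, Set.mem_setOf_eq] at hb

lemma u_clause {n : ℕ} {C : Set (Lit (SDV n))} (hC : C ∈ (StdDepTrap n).matrix)
    (hu : varIn SDV.u C) :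
    C = {(SDV.c, false), (SDV.u, true), (SDV.x, false)} := by
  rcases sd_mem_cases hC with ⟨C₀, h₀, rfl⟩ | h | h | h | h | h | h | h | h | h | h
  · exact absurd hu (php_no_ux h₀ (Or.inl rfl))
  all_goals subst h
  all_goals first
    | rfl
    | (obtain ⟨bb, hb⟩ := hu; simp [Set.mem_insert_iff] at hb)

lemma x_clause {n : ℕ} {C : Set (Lit (SDV n))} (hC : C ∈ (StdDepTrap n).matrix)
    (hx : varIn SDV.x C) :
    C = {(SDV.a, false), (SDV.x, true)} ∨
    C = {(SDV.c, false), (SDV.u, true), (SDV.x, false)} := by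
  rcases sd_mem_cases hC with ⟨C₀, h₀, rfl⟩ | h | h | h | h | h | h | h | h | h | h
  · exact absurd hx (php_no_ux h₀ (Or.inr rfl))
  all_goals subst h
  all_goals first
    | (left; rfl)
    | (right; rfl)
    | (obtain ⟨bb, hb⟩ := hx; simp [Set.mem_insert_iff] at hb)

lemma reach_inv {n : ℕ} {C : Set (Lit (SDV n))}
    (h : stdReach (StdDepTrap n) SDV.u C) :
    C = {(SDV.a, false), (SDV.x, true)} ∨
    C = {(SDV.c, false), (SDV.u, true), (SDV.x, false)} := by
  induction h with
  | base hC hu => exact Or.inr (u_clause hC hu)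
  | @step C C' z _ hC' hz hzC hzC' ih =>
    -- z must be x
    have hzx : z = SDV.x := by
      obtain ⟨hlvl, _, hex⟩ := hz
      rcases ih with rfl | rfl <;> obtain ⟨bb, hb⟩ := hzC <;>
        simp only [Set.mem_insert_iff, Set.mem_singleton_iff, Prod.mk.injEq] at hb
      · rcases hb with ⟨rfl, _⟩ | ⟨rfl, _⟩
        · exact absurd hlvl (by simp [StdDepTrap, SDlvl])
        · rfl
      · rcases hb with ⟨rfl, _⟩ | ⟨rfl, _⟩ | ⟨rfl, _⟩
        · exact absurd hlvl (by simp [StdDepTrap, SDlvl])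
        · exact absurd hex (by simp [StdDepTrap, SDexists])
        · rfl
    subst hzx
    exact x_clause hC' hzC'

/-- `(u,y) ∉ D^std(StdDepTrap n)`, even though `y` is existential and quantified
after the universal `u`. -/
theorem stmt19 (n : ℕ) :
    (StdDepTrap n).isExists SDV.y ∧
    (StdDepTrap n).lvl SDV.u < (StdDepTrap n).lvl SDV.y ∧
    ¬ Dstd (StdDepTrap n) SDV.u SDV.y := by
  refine ⟨trivial, by simp [StdDepTrap, SDlvl], ?_⟩
  rintro ⟨-, C, hr, bb, hb⟩
  rcases reach_inv hr with rfl | rfl <;>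
    simp [Set.mem_insert_iff] at hb

end QCDCLDep
end
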